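/- arXiv:2110.08208 — 4 statements merged into one kernel-verified Lean document; each statement's English description precedes it below -/
import Mathlib

section
/- Let ΔABC be a Euclidean triangle with side lengths a, b, c (opposite vertices A, B, C) in which every angle is at least ε > 0. If δ < ε²/48 and positive reals a', b', c' satisfy |a' - a| ≤ δa, |b' - b| ≤ δb, |c' - c| ≤ δc, then a', b', c' satisfy the strict triangle inequality (so form a Euclidean triangle). -/
/-!
By the law of cosines `b² - (a - c)² = 2ac (1 - cos B)`, and Jordan's inequality gives
`1 - cos B ≥ 2B²/π²`. Since `b² - (a - c)² = (b + c - a)(a + b - c)` and `a + b - c < 2a`, the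
angles `B, C ≥ ε` bound the defect `b + c - a` below by `2(ε/π)² max(b, c)`, hence by
`ε²/(2π²) (a + b + c)`. Perturbing each side by a relative error `δ` moves the defect by at most
`δ (a + b + c)`, which is smaller because `48 > 2π²`.
-/

open Real

lemma Real.le_cos_of_le_arccos {x θ : ℝ} (hθ : 0 < θ) (h : θ ≤ arccos x) : x ≤ cos θ := by
  rcases le_or_gt x (-1) with hx | hx
  · linarith [neg_one_le_cos θ]
  have hx1 : x ≤ 1 := by
    by_contra! hx1
    rw [arccos_of_one_le hx1.le] at h
    linarith
  calc x = cos (arccos x) := (cos_arccos hx.le hx1).symm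
    _ ≤ cos θ := cos_le_cos_of_nonneg_of_le_pi hθ.le (arccos_le_pi x) h

lemma mul_le_sq_sub_sq_of_le_arccos {a b c θ : ℝ} (hb : 0 < b) (hc : 0 < c) (hθ : 0 < θ)
    (h : θ ≤ arccos ((b ^ 2 + c ^ 2 - a ^ 2) / (2 * b * c))) :
    2 * b * c * (2 / π ^ 2 * θ ^ 2) ≤ a ^ 2 - (b - c) ^ 2 := by
  have hθπ : |θ| ≤ π := abs_le.2 ⟨by linarith [pi_pos], h.trans (arccos_le_pi _)⟩
  have hcos := (le_cos_of_le_arccos hθ h).trans (cos_le_one_sub_mul_cos_sq hθπ)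
  rw [div_le_iff₀ (by positivity)] at hcos
  linear_combination hcos

lemma mul_le_add_sub_of_mul_le_sq_sub_sq {a b c s : ℝ} (ha : 0 < a) (hab : a < b + c)
    (hba : b < a + c) (h : 2 * a * c * s ≤ b ^ 2 - (a - c) ^ 2) : s * c ≤ b + c - a := by
  have h2a : 2 * a * (s * c) ≤ 2 * a * (b + c - a) :=
    calc 2 * a * (s * c) = 2 * a * c * s := by ring
      _ ≤ b ^ 2 - (a - c) ^ 2 := h
      _ = (b + c - a) * (a + b - c) := by ring
      _ ≤ (b + c - a) * (2 * a) := mul_le_mul_of_nonneg_left (by linarith) (by linarith)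
      _ = 2 * a * (b + c - a) := by ring
  exact le_of_mul_le_mul_left h2a (by positivity)

lemma lt_add_of_perturbation {a b c a' b' c' s δ : ℝ} (ha : 0 < a) (hab : a < b + c)
    (hba : b < a + c) (hca : c < a + b) (hs : 4 * δ < s)
    (hB : 2 * a * c * s ≤ b ^ 2 - (a - c) ^ 2) (hC : 2 * a * b * s ≤ c ^ 2 - (a - b) ^ 2)
    (hpa : |a' - a| ≤ δ * a) (hpb : |b' - b| ≤ δ * b) (hpc : |c' - c| ≤ δ * c) :
    a' < b' + c' := by
  have hdefect_c := mul_le_add_sub_of_mul_le_sq_sub_sq ha hab hba hB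
  have hdefect_b := mul_le_add_sub_of_mul_le_sq_sub_sq (s := s) (b := c) (c := b) ha
    (by linarith) hca (by linear_combination hC)
  have hδ : 0 ≤ δ := nonneg_of_mul_nonneg_left ((abs_nonneg _).trans hpa) ha
  have hperturb : δ * (a + b + c) < s * (b + c) / 2 :=
    calc δ * (a + b + c) ≤ 2 * δ * (b + c) := by nlinarith
      _ < s * (b + c) / 2 := by nlinarith
  linarith [(abs_le.1 hpa).2, (abs_le.1 hpb).1, (abs_le.1 hpc).1]

theorem perturbed_triangle_inequality_general (a b c a' b' c' ε δ : ℝ)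
    (ha : 0 < a) (hb : 0 < b) (hc : 0 < c)
    (htri1 : a < b + c) (htri2 : b < a + c) (htri3 : c < a + b)
    (hε : 0 < ε)
    (hA : Real.arccos ((b ^ 2 + c ^ 2 - a ^ 2) / (2 * b * c)) ≥ ε)
    (hB : Real.arccos ((a ^ 2 + c ^ 2 - b ^ 2) / (2 * a * c)) ≥ ε)
    (hC : Real.arccos ((a ^ 2 + b ^ 2 - c ^ 2) / (2 * a * b)) ≥ ε)
    (hδ : δ < ε ^ 2 / 48)
    (hpa : |a' - a| ≤ δ * a) (hpb : |b' - b| ≤ δ * b) (hpc : |c' - c| ≤ δ * c) :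
    a' < b' + c' ∧ b' < a' + c' ∧ c' < a' + b' := by
  have hs : 4 * δ < 2 / π ^ 2 * ε ^ 2 := by
    have hπ : 1 / 12 ≤ 2 / π ^ 2 := by
      rw [div_le_div_iff₀ (by norm_num) (by positivity)]
      nlinarith [pi_le_four, pi_pos]
    linarith [mul_le_mul_of_nonneg_right hπ (sq_nonneg ε)]
  have hA' := mul_le_sq_sub_sq_of_le_arccos hb hc hε hA
  have hB' := mul_le_sq_sub_sq_of_le_arccos ha hc hε hB
  have hC' := mul_le_sq_sub_sq_of_le_arccos ha hb hε hC
  refine ⟨lt_add_of_perturbation ha htri1 htri2 htri3 hs hB' hC' hpa hpb hpc, ?_, ?_⟩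
  · exact lt_add_of_perturbation hb htri2 htri1 (by linarith) hs (by linear_combination hA')
      (by linear_combination hC') hpb hpa hpc
  · exact lt_add_of_perturbation hc htri3 (by linarith) (by linarith) hs (by linear_combination hA')
      (by linear_combination hB') hpc hpa hpb

/-- If all the angles (given by the law of cosines) of the Euclidean triangle with side
lengths `a, b, c` are at least `ε > 0`, `δ < ε²/48`, and `a', b', c'` are positive reals
with `|a'-a| ≤ δa`, `|b'-b| ≤ δb`, `|c'-c| ≤ δc`, then `a', b', c'` satisfy the strict
triangle inequality. -/
theorem perturbed_triangle_inequality (a b c a' b' c' ε δ : ℝ)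
    (ha : 0 < a) (hb : 0 < b) (hc : 0 < c)
    (ha' : 0 < a') (hb' : 0 < b') (hc' : 0 < c')
    (htri1 : a < b + c) (htri2 : b < a + c) (htri3 : c < a + b)
    (hε : 0 < ε)
    (hA : Real.arccos ((b ^ 2 + c ^ 2 - a ^ 2) / (2 * b * c)) ≥ ε)
    (hB : Real.arccos ((a ^ 2 + c ^ 2 - b ^ 2) / (2 * a * c)) ≥ ε)
    (hC : Real.arccos ((a ^ 2 + b ^ 2 - c ^ 2) / (2 * a * b)) ≥ ε)
    (hδ : δ < ε ^ 2 / 48)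
    (hpa : |a' - a| ≤ δ * a) (hpb : |b' - b| ≤ δ * b) (hpc : |c' - c| ≤ δ * c) :
    a' < b' + c' ∧ b' < a' + c' ∧ c' < a' + b' :=
  perturbed_triangle_inequality_general a b c a' b' c' ε δ ha hb hc htri1 htri2 htri3 hε hA hB hC hδ
    hpa hpb hpc
end

section
/- Let ΔABC be a Euclidean triangle with side lengths a, b, c whose angles are all at least ε > 0, and let δ < ε²/48. If a', b', c' satisfy |a' - a| ≤ δa, |b' - b| ≤ δb, |c' - c| ≤ δc, then the angle A' opposite a' in the triangle with sides a', b', c' satisfies |A' - A| ≤ (24/ε)δ. -/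
/-!
With `x = (b² + c² - a²) / 2bc` we have `A = arccos x`, and concavity of `sin` on `[0, π]` with
Jordan's inequality gives `sin A · |A' - A| ≤ π |x' - x|`; so it is enough to show
`ε |x' - x| ≤ 6 δ sin A`. The projection formula `a = b cos C + c cos B` shows that all three
cosines lie in `[-cos ε, cos ε]`. Writing `a' = a (1 + α)`, `b' = b (1 + β)`, `c' = c (1 + γ)`,
the first-order part of `x' - x` is `(2ab cos C (β - α) + 2ac cos B (γ - α)) / 2bc`, and
`ε cos ε ≤ sin ε` together with the law of sines `a sin ε ≤ b sin A, c sin A` bounds it by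
`4 δ sin A / ε`. The second-order part is of size `δ² (a² + b² + c²) / bc`, which the law of sines
and `δ < ε² / 48` make smaller still.
-/

open Real Set

namespace Real

lemma sin_mul_abs_sub_le {A A' : ℝ} (hA : A ∈ Icc 0 π) (hA' : A' ∈ Icc 0 π) :
    sin A * |A' - A| ≤ π * |cos A' - cos A| := by
  have hmid : sin A ≤ 2 * sin ((A' + A) / 2) := by
    have hconc := strictConcaveOn_sin_Icc.concaveOn.2 hA hA' (by norm_num : (0 : ℝ) ≤ 1 / 2)
      (by norm_num : (0 : ℝ) ≤ 1 / 2) (by norm_num)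
    simp only [smul_eq_mul] at hconc
    rw [show (A' + A) / 2 = 1 / 2 * A + 1 / 2 * A' by ring]
    linarith [sin_nonneg_of_nonneg_of_le_pi hA'.1 hA'.2]
  have hhalf : |A' - A| ≤ π * |sin ((A' - A) / 2)| := by
    have hdiff : |A' - A| ≤ π :=
      abs_sub_le_iff.2 ⟨by linarith [hA.1, hA'.2], by linarith [hA.2, hA'.1]⟩
    have hjordan := mul_abs_le_abs_sin (x := (A' - A) / 2)
      (by rw [abs_div, abs_two]; linarith)
    rw [abs_div, abs_two, div_mul_div_comm, div_le_iff₀ (by positivity)] at hjordan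
    linarith
  have hmid0 : 0 ≤ sin ((A' + A) / 2) :=
    sin_nonneg_of_nonneg_of_le_pi (by linarith [hA.1, hA'.1]) (by linarith [hA.2, hA'.2])
  calc sin A * |A' - A| ≤ 2 * sin ((A' + A) / 2) * (π * |sin ((A' - A) / 2)|) :=
        mul_le_mul hmid hhalf (abs_nonneg _) (by positivity)
    _ = π * |cos A' - cos A| := by
        rw [cos_sub_cos, abs_mul, abs_mul, abs_of_nonneg hmid0]; norm_num; ring

lemma cos_arccos_eq_projIcc (x : ℝ) :
    cos (arccos x) = projIcc (-1) 1 (neg_le_self zero_le_one) x := by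
  rw [arccos, ← arcsin_projIcc, ← arccos, cos_arccos (projIcc _ _ _ x).2.1 (projIcc _ _ _ x).2.2]

lemma abs_cos_arccos_sub_cos_arccos_le (u v : ℝ) :
    |cos (arccos v) - cos (arccos u)| ≤ |v - u| := by
  rw [cos_arccos_eq_projIcc, cos_arccos_eq_projIcc]
  exact abs_projIcc_sub_projIcc _

lemma sin_arccos_mul_abs_arccos_sub_le (u v : ℝ) :
    sin (arccos u) * |arccos v - arccos u| ≤ π * |v - u| :=
  (sin_mul_abs_sub_le ⟨arccos_nonneg u, arccos_le_pi u⟩ ⟨arccos_nonneg v, arccos_le_pi v⟩).trans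
    (mul_le_mul_of_nonneg_left (abs_cos_arccos_sub_cos_arccos_le u v) pi_pos.le)

lemma le_cos_of_le_arccos_s8 {x ε : ℝ} (hε : 0 < ε) (h : ε ≤ arccos x) : x ≤ cos ε := by
  have hx1 : x < 1 := by
    by_contra! hx
    rw [arccos_of_one_le hx] at h
    linarith
  rcases le_or_gt x (-1) with hx | hx
  · linarith [neg_one_le_cos ε]
  · calc x = cos (arccos x) := (cos_arccos hx.le hx1.le).symm
      _ ≤ cos ε := cos_le_cos_of_nonneg_of_le_pi hε.le (arccos_le_pi x) h

lemma sin_le_sin_arccos_of_abs_le_cos {x ε : ℝ} (h : |x| ≤ cos ε) : sin ε ≤ sin (arccos x) := by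
  rw [sin_arccos]
  refine (le_abs_self _).trans (abs_le_sqrt ?_)
  nlinarith [sin_sq_add_cos_sq ε, sq_abs x, abs_nonneg x]

lemma cos_mul_le_sin {ε : ℝ} (hε : 0 < ε) (hεπ : ε < π / 2) : cos ε * ε ≤ sin ε := by
  have htan := le_tan hε.le hεπ
  rwa [tan_eq_sin_div_cos, le_div_iff₀ (cos_pos_of_mem_Ioo ⟨by linarith [pi_pos], hεπ⟩),
    mul_comm] at htan

end Real

noncomputable def cosOpp (a b c : ℝ) : ℝ := (b ^ 2 + c ^ 2 - a ^ 2) / (2 * b * c)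

lemma cosOpp_swap (a b c : ℝ) : cosOpp a c b = cosOpp a b c := by
  unfold cosOpp; ring_nf

lemma mul_cosOpp_add_mul_cosOpp {a b c : ℝ} (ha : a ≠ 0) (hb : b ≠ 0) (hc : c ≠ 0) :
    c * cosOpp b a c + b * cosOpp c a b = a := by
  unfold cosOpp; field_simp; ring

lemma sq_mul_one_sub_cosOpp_sq {a b c : ℝ} (ha : a ≠ 0) (hb : b ≠ 0) (hc : c ≠ 0) :
    b ^ 2 * (1 - cosOpp a b c ^ 2) = a ^ 2 * (1 - cosOpp b a c ^ 2) := by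
  unfold cosOpp; field_simp; ring

lemma mul_sin_arccos_cosOpp {a b c : ℝ} (ha : 0 < a) (hb : 0 < b) (hc : c ≠ 0) :
    b * sin (arccos (cosOpp a b c)) = a * sin (arccos (cosOpp b a c)) := by
  rw [sin_arccos, sin_arccos]
  calc b * √(1 - cosOpp a b c ^ 2) = √(b ^ 2 * (1 - cosOpp a b c ^ 2)) := by
        rw [sqrt_mul (sq_nonneg b), sqrt_sq hb.le]
    _ = √(a ^ 2 * (1 - cosOpp b a c ^ 2)) := by rw [sq_mul_one_sub_cosOpp_sq ha.ne' hb.ne' hc]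
    _ = a * √(1 - cosOpp b a c ^ 2) := by rw [sqrt_mul (sq_nonneg a), sqrt_sq ha.le]

lemma le_add_mul_of_cosOpp_le {a b c k : ℝ} (ha : 0 < a) (hb : 0 < b) (hc : 0 < c)
    (hy : cosOpp b a c ≤ k) (hz : cosOpp c a b ≤ k) : a ≤ (b + c) * k := by
  rw [← mul_cosOpp_add_mul_cosOpp ha.ne' hb.ne' hc.ne']
  nlinarith

lemma abs_cosOpp_le {a b c k : ℝ} (ha : 0 < a) (hb : 0 < b) (hc : 0 < c) (hk : k ≤ 1)
    (hx : cosOpp a b c ≤ k) (hy : cosOpp b a c ≤ k) (hz : cosOpp c a b ≤ k) :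
    |cosOpp a b c| ≤ k := by
  have hside := le_add_mul_of_cosOpp_le ha hb hc hy hz
  have hk0 : 0 ≤ k := by nlinarith
  refine abs_le.2 ⟨?_, hx⟩
  unfold cosOpp
  rw [le_div_iff₀ (by positivity)]
  -- `b² + c² - a² + 2bck ≥ (b² + c²)(1 - k²) + 2bck(1 - k)` since `a² ≤ (b + c)² k²`
  nlinarith [mul_le_mul hside hside ha.le (by positivity),
    mul_nonneg (mul_nonneg (add_nonneg (sq_nonneg b) (sq_nonneg c)) (sub_nonneg.2 hk))
      (by linarith : 0 ≤ 1 + k),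
    mul_nonneg (mul_nonneg (mul_nonneg hb.le hc.le) hk0) (sub_nonneg.2 hk)]

lemma mul_sin_le_mul_sin_arccos_cosOpp {a b c ε : ℝ} (ha : 0 < a) (hb : 0 < b) (hc : 0 < c)
    (hy : |cosOpp b a c| ≤ cos ε) : a * sin ε ≤ b * sin (arccos (cosOpp a b c)) := by
  rw [mul_sin_arccos_cosOpp ha hb hc.ne']
  exact mul_le_mul_of_nonneg_left (sin_le_sin_arccos_of_abs_le_cos hy) ha.le

lemma mul_sin_le_of_abs_cosOpp_le {a b c ε : ℝ} (ha : 0 < a) (hb : 0 < b) (hc : 0 < c)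
    (hy : |cosOpp b a c| ≤ cos ε) : a * sin ε ≤ b :=
  (mul_sin_le_mul_sin_arccos_cosOpp ha hb hc hy).trans (mul_le_of_le_one_right hb.le (sin_le_one _))

lemma mul_add_mul_sin_le_two_mul_sin_arccos_cosOpp {a b c ε : ℝ} (ha : 0 < a) (hb : 0 < b)
    (hc : 0 < c) (hy : |cosOpp b a c| ≤ cos ε) (hz : |cosOpp c a b| ≤ cos ε) :
    a * (b + c) * sin ε ≤ 2 * (b * c * sin (arccos (cosOpp a b c))) := by
  have hab := mul_sin_le_mul_sin_arccos_cosOpp ha hb hc hy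
  have hac := mul_sin_le_mul_sin_arccos_cosOpp ha hc hb hz
  rw [cosOpp_swap a b c] at hac
  nlinarith

lemma sum_sq_mul_sin_sq_le_three_mul_sin_arccos_cosOpp {a b c ε : ℝ} (ha : 0 < a) (hb : 0 < b)
    (hc : 0 < c) (hs : 0 ≤ sin ε) (hx : |cosOpp a b c| ≤ cos ε) (hy : |cosOpp b a c| ≤ cos ε)
    (hz : |cosOpp c a b| ≤ cos ε) :
    (a ^ 2 + b ^ 2 + c ^ 2) * sin ε ^ 2 ≤ 3 * (b * c * sin (arccos (cosOpp a b c))) := by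
  have hsS := sin_le_sin_arccos_of_abs_le_cos hx
  have hS1 := sin_le_one (arccos (cosOpp a b c))
  have hab := mul_sin_le_mul_sin_arccos_cosOpp ha hb hc hy
  have hac := mul_sin_le_mul_sin_arccos_cosOpp ha hc hb hz
  rw [cosOpp_swap a b c] at hac
  have hbc : b * sin ε ≤ c := mul_sin_le_of_abs_cosOpp_le hb hc ha (by rwa [cosOpp_swap])
  have hcb : c * sin ε ≤ b := mul_sin_le_of_abs_cosOpp_le hc hb ha (by rwa [cosOpp_swap])
  have hbcS : 0 ≤ b * c * sin (arccos (cosOpp a b c)) :=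
    mul_nonneg (mul_nonneg hb.le hc.le) (hs.trans hsS)
  nlinarith [mul_le_mul hab hac (mul_nonneg ha.le hs) (mul_nonneg hb.le (hs.trans hsS)),
    mul_le_mul_of_nonneg_left hbc (mul_nonneg hb.le hs),
    mul_le_mul_of_nonneg_left hcb (mul_nonneg hc.le hs), mul_le_mul_of_nonneg_left hS1 hbcS,
    mul_le_mul_of_nonneg_left hsS (mul_nonneg hb.le hc.le)]

lemma lt_pi_div_two_of_cosOpp_le_cos {a b c ε : ℝ} (ha : 0 < a) (hb : 0 < b) (hc : 0 < c)
    (hε : ε ≤ π) (hy : cosOpp b a c ≤ cos ε) (hz : cosOpp c a b ≤ cos ε) : ε < π / 2 := by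
  have hk : 0 < cos ε :=
    pos_of_mul_pos_right (ha.trans_le (le_add_mul_of_cosOpp_le ha hb hc hy hz)) (by positivity)
  by_contra! h
  linarith [cos_nonpos_of_pi_div_two_le_of_le h (by linarith [pi_pos])]

lemma exists_eq_mul_one_add_of_abs_sub_le {a a' δ : ℝ} (ha : 0 < a) (h : |a' - a| ≤ δ * a) :
    ∃ α, |α| ≤ δ ∧ a' = a * (1 + α) :=
  ⟨(a' - a) / a, by rwa [abs_div, abs_of_pos ha, div_le_iff₀ ha], by field_simp; ring⟩

lemma cosOpp_mul_one_add_sub_cosOpp {a b c α β γ : ℝ} (ha : a ≠ 0) (hb : b ≠ 0) (hc : c ≠ 0)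
    (hβ : 1 + β ≠ 0) (hγ : 1 + γ ≠ 0) :
    cosOpp (a * (1 + α)) (b * (1 + β)) (c * (1 + γ)) - cosOpp a b c =
      (2 * a * b * cosOpp c a b * (β - α) + 2 * a * c * cosOpp b a c * (γ - α)
        + b ^ 2 * β * (β - γ) + c ^ 2 * γ * (γ - β) - a ^ 2 * (α ^ 2 - β * γ))
      / (2 * b * c * ((1 + β) * (1 + γ))) := by
  unfold cosOpp; field_simp; ring

lemma abs_cosOpp_mul_one_add_sub_cosOpp_mul_le {a b c α β γ δ k : ℝ}
    (ha : 0 < a) (hb : 0 < b) (hc : 0 < c) (hδ : δ < 1)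
    (hα : |α| ≤ δ) (hβ : |β| ≤ δ) (hγ : |γ| ≤ δ)
    (hy : |cosOpp b a c| ≤ k) (hz : |cosOpp c a b| ≤ k) :
    |cosOpp (a * (1 + α)) (b * (1 + β)) (c * (1 + γ)) - cosOpp a b c| * (2 * b * c * (1 - δ) ^ 2)
      ≤ 4 * δ * k * (a * (b + c)) + 2 * δ ^ 2 * (a ^ 2 + b ^ 2 + c ^ 2) := by
  obtain ⟨hα1, hα2⟩ := abs_le.1 hα
  obtain ⟨hβ1, hβ2⟩ := abs_le.1 hβ
  obtain ⟨hγ1, hγ2⟩ := abs_le.1 hγ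
  have hden : 2 * b * c * (1 - δ) ^ 2 ≤ 2 * b * c * ((1 + β) * (1 + γ)) := by
    gcongr
    rw [sq]
    exact mul_le_mul (by linarith) (by linarith) (by linarith) (by linarith)
  have hD : 0 < 2 * b * c * ((1 + β) * (1 + γ)) :=
    mul_pos (by positivity) (mul_pos (by linarith) (by linarith))
  have hnum : |2 * a * b * cosOpp c a b * (β - α) + 2 * a * c * cosOpp b a c * (γ - α)
        + b ^ 2 * β * (β - γ) + c ^ 2 * γ * (γ - β) - a ^ 2 * (α ^ 2 - β * γ)|
      ≤ 4 * δ * k * (a * (b + c)) + 2 * δ ^ 2 * (a ^ 2 + b ^ 2 + c ^ 2) := by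
    have hδ0 : 0 ≤ δ := (abs_nonneg α).trans hα
    have hk0 : 0 ≤ k := (abs_nonneg _).trans hy
    have hβα : |β - α| ≤ 2 * δ := (abs_sub _ _).trans (by linarith)
    have hγα : |γ - α| ≤ 2 * δ := (abs_sub _ _).trans (by linarith)
    have hβγ : |β - γ| ≤ 2 * δ := (abs_sub _ _).trans (by linarith)
    have hαβγ : |α ^ 2 - β * γ| ≤ 2 * δ ^ 2 := by
      refine (abs_sub _ _).trans ?_
      rw [abs_pow, abs_mul, two_mul, sq, sq]
      gcongr
    have t1 : |2 * a * b * cosOpp c a b * (β - α)| ≤ 2 * a * b * k * (2 * δ) := by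
      rw [abs_mul, abs_mul, abs_of_pos (by positivity : (0 : ℝ) < 2 * a * b)]
      gcongr
    have t2 : |2 * a * c * cosOpp b a c * (γ - α)| ≤ 2 * a * c * k * (2 * δ) := by
      rw [abs_mul, abs_mul, abs_of_pos (by positivity : (0 : ℝ) < 2 * a * c)]
      gcongr
    have t3 : |b ^ 2 * β * (β - γ)| ≤ b ^ 2 * δ * (2 * δ) := by
      rw [abs_mul, abs_mul, abs_of_pos (by positivity : (0 : ℝ) < b ^ 2)]
      gcongr
    have t4 : |c ^ 2 * γ * (γ - β)| ≤ c ^ 2 * δ * (2 * δ) := by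
      rw [abs_mul, abs_mul, abs_of_pos (by positivity : (0 : ℝ) < c ^ 2), abs_sub_comm]
      gcongr
    have t5 : |a ^ 2 * (α ^ 2 - β * γ)| ≤ a ^ 2 * (2 * δ ^ 2) := by
      rw [abs_mul, abs_of_pos (by positivity : (0 : ℝ) < a ^ 2)]
      gcongr
    obtain ⟨t1l, t1r⟩ := abs_le.1 t1
    obtain ⟨t2l, t2r⟩ := abs_le.1 t2
    obtain ⟨t3l, t3r⟩ := abs_le.1 t3
    obtain ⟨t4l, t4r⟩ := abs_le.1 t4
    obtain ⟨t5l, t5r⟩ := abs_le.1 t5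
    exact abs_le.2 ⟨by linarith, by linarith⟩
  calc _ ≤ |2 * a * b * cosOpp c a b * (β - α) + 2 * a * c * cosOpp b a c * (γ - α)
        + b ^ 2 * β * (β - γ) + c ^ 2 * γ * (γ - β) - a ^ 2 * (α ^ 2 - β * γ)| := by
        rw [cosOpp_mul_one_add_sub_cosOpp ha.ne' hb.ne' hc.ne' (by linarith) (by linarith), abs_div,
          abs_of_pos hD, div_mul_eq_mul_div, div_le_iff₀ hD]
        exact mul_le_mul_of_nonneg_left hden (abs_nonneg _)
    _ ≤ _ := hnum

lemma abs_cosOpp_mul_one_add_sub_cosOpp_mul_le_mul_sin {a b c α β γ δ ε : ℝ}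
    (ha : 0 < a) (hb : 0 < b) (hc : 0 < c) (hε : 0 < ε) (hεπ : ε < π / 2) (hδ : δ < ε ^ 2 / 48)
    (hα : |α| ≤ δ) (hβ : |β| ≤ δ) (hγ : |γ| ≤ δ) (hx : |cosOpp a b c| ≤ cos ε)
    (hy : |cosOpp b a c| ≤ cos ε) (hz : |cosOpp c a b| ≤ cos ε) :
    |cosOpp (a * (1 + α)) (b * (1 + β)) (c * (1 + γ)) - cosOpp a b c| * ε
      ≤ 6 * δ * sin (arccos (cosOpp a b c)) := by
  set S := sin (arccos (cosOpp a b c))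
  set d := |cosOpp (a * (1 + α)) (b * (1 + β)) (c * (1 + γ)) - cosOpp a b c|
  have hδ0 : 0 ≤ δ := (abs_nonneg α).trans hα
  have hε2 : ε ≤ 2 := by linarith [pi_le_four]
  have hδ12 : δ ≤ 1 / 12 := by nlinarith
  have hs0 : 0 ≤ sin ε := sin_nonneg_of_nonneg_of_le_pi hε.le (by linarith [pi_pos])
  have hεs : ε ≤ 2 * sin ε := by
    have := mul_le_sin hε.le hεπ.le
    rw [div_mul_eq_mul_div, div_le_iff₀ pi_pos] at this
    nlinarith [pi_le_four]
  have hks := cos_mul_le_sin hε hεπ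
  have hd := abs_cosOpp_mul_one_add_sub_cosOpp_mul_le ha hb hc (by linarith) hα hβ hγ hy hz
  have hfirst : ε * (4 * δ * cos ε * (a * (b + c))) ≤ 8 * δ * (b * c * S) :=
    calc ε * (4 * δ * cos ε * (a * (b + c))) = 4 * δ * (a * (b + c)) * (cos ε * ε) := by ring
      _ ≤ 4 * δ * (a * (b + c)) * sin ε :=
          mul_le_mul_of_nonneg_left hks (mul_nonneg (by linarith) (by positivity))
      _ = 4 * δ * (a * (b + c) * sin ε) := by ring
      _ ≤ 4 * δ * (2 * (b * c * S)) := mul_le_mul_of_nonneg_left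
          (mul_add_mul_sin_le_two_mul_sin_arccos_cosOpp ha hb hc hy hz) (by linarith)
      _ = 8 * δ * (b * c * S) := by ring
  have hsecond : ε * (2 * δ ^ 2 * (a ^ 2 + b ^ 2 + c ^ 2)) ≤ δ * (b * c * S) := by
    have hε3 : ε ^ 3 ≤ 8 * sin ε ^ 2 := by
      nlinarith [pow_le_pow_left₀ hε.le hεs 2]
    have hsum := sum_sq_mul_sin_sq_le_three_mul_sin_arccos_cosOpp ha hb hc hs0 hx hy hz
    calc ε * (2 * δ ^ 2 * (a ^ 2 + b ^ 2 + c ^ 2))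
        = 2 * δ * (ε * (a ^ 2 + b ^ 2 + c ^ 2)) * δ := by ring
      _ ≤ 2 * δ * (ε * (a ^ 2 + b ^ 2 + c ^ 2)) * (ε ^ 2 / 48) := by gcongr
      _ = δ * (a ^ 2 + b ^ 2 + c ^ 2) * ε ^ 3 / 24 := by ring
      _ ≤ δ * (a ^ 2 + b ^ 2 + c ^ 2) * (8 * sin ε ^ 2) / 24 := by gcongr
      _ = δ * ((a ^ 2 + b ^ 2 + c ^ 2) * sin ε ^ 2) / 3 := by ring
      _ ≤ δ * (3 * (b * c * S)) / 3 := by gcongr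
      _ = δ * (b * c * S) := by ring
  have hbc0 : 0 < 3 / 2 * (b * c) := by positivity
  refine le_of_mul_le_mul_right ?_ hbc0
  have hden : 3 / 2 * (b * c) ≤ 2 * b * c * (1 - δ) ^ 2 := by nlinarith
  calc d * ε * (3 / 2 * (b * c)) ≤ ε * (d * (2 * b * c * (1 - δ) ^ 2)) := by
        rw [mul_comm d ε, mul_assoc]
        gcongr
    _ ≤ ε * (4 * δ * cos ε * (a * (b + c)) + 2 * δ ^ 2 * (a ^ 2 + b ^ 2 + c ^ 2)) :=
        mul_le_mul_of_nonneg_left hd hε.le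
    _ ≤ 6 * δ * S * (3 / 2 * (b * c)) := by linarith

theorem perturbed_triangle_angle_estimate_general (a b c a' b' c' ε δ : ℝ)
    (ha : 0 < a) (hb : 0 < b) (hc : 0 < c)
    (hε : 0 < ε)
    (hA : Real.arccos ((b ^ 2 + c ^ 2 - a ^ 2) / (2 * b * c)) ≥ ε)
    (hB : Real.arccos ((a ^ 2 + c ^ 2 - b ^ 2) / (2 * a * c)) ≥ ε)
    (hC : Real.arccos ((a ^ 2 + b ^ 2 - c ^ 2) / (2 * a * b)) ≥ ε)
    (hδ : δ < ε ^ 2 / 48)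
    (hpa : |a' - a| ≤ δ * a) (hpb : |b' - b| ≤ δ * b) (hpc : |c' - c| ≤ δ * c) :
    |Real.arccos ((b' ^ 2 + c' ^ 2 - a' ^ 2) / (2 * b' * c'))
        - Real.arccos ((b ^ 2 + c ^ 2 - a ^ 2) / (2 * b * c))| ≤ 24 / ε * δ := by
  show |arccos (cosOpp a' b' c') - arccos (cosOpp a b c)| ≤ 24 / ε * δ
  have hxk : cosOpp a b c ≤ cos ε := le_cos_of_le_arccos_s8 hε hA
  have hyk : cosOpp b a c ≤ cos ε := le_cos_of_le_arccos_s8 hε hB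
  have hzk : cosOpp c a b ≤ cos ε := le_cos_of_le_arccos_s8 hε hC
  have hx := abs_cosOpp_le ha hb hc (cos_le_one ε) hxk hyk hzk
  have hy := abs_cosOpp_le hb ha hc (cos_le_one ε) hyk hxk (by rwa [cosOpp_swap])
  have hz := abs_cosOpp_le hc ha hb (cos_le_one ε) hzk (by rwa [cosOpp_swap]) (by rwa [cosOpp_swap])
  have hεπ := lt_pi_div_two_of_cosOpp_le_cos ha hb hc (hA.trans (arccos_le_pi _)) hyk hzk
  obtain ⟨α, hα, rfl⟩ := exists_eq_mul_one_add_of_abs_sub_le ha hpa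
  obtain ⟨β, hβ, rfl⟩ := exists_eq_mul_one_add_of_abs_sub_le hb hpb
  obtain ⟨γ, hγ, rfl⟩ := exists_eq_mul_one_add_of_abs_sub_le hc hpc
  have hcos := abs_cosOpp_mul_one_add_sub_cosOpp_mul_le_mul_sin ha hb hc hε hεπ hδ hα hβ hγ hx hy hz
  have harc := sin_arccos_mul_abs_arccos_sub_le (cosOpp a b c)
    (cosOpp (a * (1 + α)) (b * (1 + β)) (c * (1 + γ)))
  have hS : 0 < sin (arccos (cosOpp a b c)) :=
    (sin_pos_of_pos_of_lt_pi hε (by linarith [pi_pos])).trans_le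
      (sin_le_sin_arccos_of_abs_le_cos hx)
  have hδ0 : 0 ≤ δ := (abs_nonneg α).trans hα
  rw [div_mul_eq_mul_div, le_div_iff₀ hε]
  refine le_of_mul_le_mul_left ?_ hS
  nlinarith [mul_le_mul_of_nonneg_right harc hε.le, mul_le_mul_of_nonneg_left hcos pi_pos.le,
    mul_le_mul_of_nonneg_left pi_le_four (mul_nonneg hδ0 hS.le)]

/-- If all the angles of the Euclidean triangle with side lengths `a, b, c` are at least
`ε > 0`, `δ < ε²/48`, and `|a'-a| ≤ δa`, `|b'-b| ≤ δb`, `|c'-c| ≤ δc`, then the angle `A'`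
opposite `a'` satisfies `|A' - A| ≤ (24/ε)δ`. -/
theorem perturbed_triangle_angle_estimate (a b c a' b' c' ε δ : ℝ)
    (ha : 0 < a) (hb : 0 < b) (hc : 0 < c)
    (ha' : 0 < a') (hb' : 0 < b') (hc' : 0 < c')
    (htri1 : a < b + c) (htri2 : b < a + c) (htri3 : c < a + b)
    (hε : 0 < ε)
    (hA : Real.arccos ((b ^ 2 + c ^ 2 - a ^ 2) / (2 * b * c)) ≥ ε)
    (hB : Real.arccos ((a ^ 2 + c ^ 2 - b ^ 2) / (2 * a * c)) ≥ ε)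
    (hC : Real.arccos ((a ^ 2 + b ^ 2 - c ^ 2) / (2 * a * b)) ≥ ε)
    (hδ : δ < ε ^ 2 / 48)
    (hpa : |a' - a| ≤ δ * a) (hpb : |b' - b| ≤ δ * b) (hpc : |c' - c| ≤ δ * c) :
    |Real.arccos ((b' ^ 2 + c' ^ 2 - a' ^ 2) / (2 * b' * c'))
        - Real.arccos ((b ^ 2 + c ^ 2 - a ^ 2) / (2 * b * c))| ≤ 24 / ε * δ :=
  perturbed_triangle_angle_estimate_general a b c a' b' c' ε δ ha hb hc hε hA hB hC hδ hpa hpb hpc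
end

section
/- Let ΔABC be a Euclidean triangle with side lengths a, b, c whose angles are all at least ε > 0, and let δ < ε²/48. If a', b', c' satisfy |a' - a| ≤ δa, |b' - b| ≤ δb, |c' - c| ≤ δc, then the areas satisfy | area(a',b',c') - area(a,b,c) | ≤ (576/ε²) δ · area(a,b,c). -/
/-- Heron's formula for the area of a Euclidean triangle with side lengths `a, b, c`. -/
noncomputable def heronArea (a b c : ℝ) : ℝ :=
  Real.sqrt ((a + b + c) * (-a + b + c) * (a - b + c) * (a + b - c)) / 4

private lemma cos_side_bound (x y z ε : ℝ) (hy : 0 < y) (hz : 0 < z)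
    (h1 : x < y + z) (h2 : y - z < x) (h3 : z - y < x) (hε0 : 0 ≤ ε)
    (hA : Real.arccos ((y ^ 2 + z ^ 2 - x ^ 2) / (2 * y * z)) ≥ ε) :
    y ^ 2 + z ^ 2 - x ^ 2 ≤ 2 * y * z * Real.cos ε := by
  set q := (y ^ 2 + z ^ 2 - x ^ 2) / (2 * y * z) with hq
  have hyz : 0 < 2 * y * z := by positivity
  have hq1 : q ≤ 1 := by
    rw [hq, div_le_one hyz]; nlinarith
  have hq2 : -1 ≤ q := by
    rw [hq, le_div_iff₀ hyz]; nlinarith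
  have : q ≤ Real.cos ε := by
    calc q = Real.cos (Real.arccos q) := (Real.cos_arccos hq2 hq1).symm
      _ ≤ Real.cos ε :=
        Real.cos_le_cos_of_nonneg_of_le_pi hε0 (Real.arccos_le_pi q) hA
  rw [hq, div_le_iff₀ hyz] at this
  linarith

set_option maxHeartbeats 1600000 in
/-- If all the angles of the Euclidean triangle with side lengths `a, b, c` are at least
`ε > 0`, `δ < ε²/48`, and `|a'-a| ≤ δa`, `|b'-b| ≤ δb`, `|c'-c| ≤ δc`, then
`|area(a',b',c') - area(a,b,c)| ≤ (576/ε²) δ · area(a,b,c)`. -/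
theorem perturbed_triangle_area_estimate (a b c a' b' c' ε δ : ℝ)
    (ha : 0 < a) (hb : 0 < b) (hc : 0 < c)
    (ha' : 0 < a') (hb' : 0 < b') (hc' : 0 < c')
    (htri1 : a < b + c) (htri2 : b < a + c) (htri3 : c < a + b)
    (hε : 0 < ε)
    (hA : Real.arccos ((b ^ 2 + c ^ 2 - a ^ 2) / (2 * b * c)) ≥ ε)
    (hB : Real.arccos ((a ^ 2 + c ^ 2 - b ^ 2) / (2 * a * c)) ≥ ε)
    (hC : Real.arccos ((a ^ 2 + b ^ 2 - c ^ 2) / (2 * a * b)) ≥ ε)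
    (hδ : δ < ε ^ 2 / 48)
    (hpa : |a' - a| ≤ δ * a) (hpb : |b' - b| ≤ δ * b) (hpc : |c' - c| ≤ δ * c) :
    |heronArea a' b' c' - heronArea a b c| ≤ 576 / ε ^ 2 * δ * heronArea a b c := by
  have hδ0 : 0 ≤ δ := by nlinarith [abs_nonneg (a' - a)]
  have hεπ : ε ≤ Real.pi := hA.trans' (le_refl _) |>.trans (Real.arccos_le_pi _)
  -- cos ε upper bound
  have hπ : Real.pi < 3.15 := Real.pi_lt_d2
  have hπ0 : 0 < Real.pi := Real.pi_pos
  have hcos : Real.cos ε ≤ 1 - ε ^ 2 / 5 := by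
    have h1 : Real.cos ε ≤ 1 - 2 / Real.pi ^ 2 * ε ^ 2 :=
      Real.cos_le_one_sub_mul_cos_sq (by rw [abs_of_nonneg hε.le]; exact hεπ)
    have h2 : ε ^ 2 / 5 ≤ 2 / Real.pi ^ 2 * ε ^ 2 := by
      have hπ2 : Real.pi ^ 2 < 10 := by nlinarith
      have key : (1:ℝ) / 5 ≤ 2 / Real.pi ^ 2 := by
        rw [div_le_div_iff₀ (by norm_num) (by positivity)]; nlinarith
      calc ε ^ 2 / 5 = 1 / 5 * ε ^ 2 := by ring
        _ ≤ 2 / Real.pi ^ 2 * ε ^ 2 := mul_le_mul_of_nonneg_right key (sq_nonneg ε)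
    linarith
  -- law-of-cosines style bounds
  have hcA := cos_side_bound a b c ε hb hc htri1 (by linarith) (by linarith) hε.le hA
  have hcB := cos_side_bound b a c ε ha hc htri2 (by linarith) (by linarith) hε.le hB
  have hcC := cos_side_bound c a b ε ha hb htri3 (by linarith) (by linarith) hε.le hC
  have hbc : (0:ℝ) < b * c := mul_pos hb hc
  have hac : (0:ℝ) < a * c := mul_pos ha hc
  have hab : (0:ℝ) < a * b := mul_pos ha hb
  have hYZ : 2 / 5 * ε ^ 2 * (b * c) ≤ (a - b + c) * (a + b - c) := by
    have h := mul_le_mul_of_nonneg_left hcos (by positivity : (0:ℝ) ≤ 2 * b * c)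
    linarith [h, hcA]
  have hXZ : 2 / 5 * ε ^ 2 * (a * c) ≤ (-a + b + c) * (a + b - c) := by
    have h := mul_le_mul_of_nonneg_left hcos (by positivity : (0:ℝ) ≤ 2 * a * c)
    linarith [h, hcB]
  have hXY : 2 / 5 * ε ^ 2 * (a * b) ≤ (-a + b + c) * (a - b + c) := by
    have h := mul_le_mul_of_nonneg_left hcos (by positivity : (0:ℝ) ≤ 2 * a * b)
    linarith [h, hcC]
  have hS0 : (0:ℝ) < a + b + c := by linarith
  have hX0 : (0:ℝ) < -a + b + c := by linarith
  have hY0 : (0:ℝ) < a - b + c := by linarith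
  have hZ0 : (0:ℝ) < a + b - c := by linarith
  -- lower bounds on the factors relative to the perimeter
  have hXb : ε ^ 2 * b ≤ 5 * (-a + b + c) := by
    have h := mul_le_mul_of_nonneg_left (show a - b + c ≤ 2 * a by linarith) hX0.le
    have h3 : a * (ε ^ 2 * b) ≤ a * (5 * (-a + b + c)) := by
      linarith [hXY, h]
    exact le_of_mul_le_mul_left h3 ha
  have hXc : ε ^ 2 * c ≤ 5 * (-a + b + c) := by
    have h := mul_le_mul_of_nonneg_left (show a + b - c ≤ 2 * a by linarith) hX0.le
    have h3 : a * (ε ^ 2 * c) ≤ a * (5 * (-a + b + c)) := by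
      linarith [hXZ, h]
    exact le_of_mul_le_mul_left h3 ha
  have hYa : ε ^ 2 * a ≤ 5 * (a - b + c) := by
    have h := mul_le_mul_of_nonneg_left (show -a + b + c ≤ 2 * b by linarith) hY0.le
    have h3 : b * (ε ^ 2 * a) ≤ b * (5 * (a - b + c)) := by
      linarith [hXY, h]
    exact le_of_mul_le_mul_left h3 hb
  have hYc : ε ^ 2 * c ≤ 5 * (a - b + c) := by
    have h := mul_le_mul_of_nonneg_left (show a + b - c ≤ 2 * b by linarith) hY0.le
    have h3 : b * (ε ^ 2 * c) ≤ b * (5 * (a - b + c)) := by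
      linarith [hYZ, h]
    exact le_of_mul_le_mul_left h3 hb
  have hZa : ε ^ 2 * a ≤ 5 * (a + b - c) := by
    have h := mul_le_mul_of_nonneg_left (show -a + b + c ≤ 2 * c by linarith) hZ0.le
    have h3 : c * (ε ^ 2 * a) ≤ c * (5 * (a + b - c)) := by
      linarith [hXZ, h]
    exact le_of_mul_le_mul_left h3 hc
  have hZb : ε ^ 2 * b ≤ 5 * (a + b - c) := by
    have h := mul_le_mul_of_nonneg_left (show a - b + c ≤ 2 * c by linarith) hZ0.le
    have h3 : c * (ε ^ 2 * b) ≤ c * (5 * (a + b - c)) := by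
      linarith [hYZ, h]
    exact le_of_mul_le_mul_left h3 hc
  have hεsq : ε ^ 2 < 10 := by nlinarith [hεπ, hπ, hε, hπ0]
  have haux : 0 ≤ ε ^ 2 * (b + c - a) := mul_nonneg (sq_nonneg ε) (by linarith)
  have haux2 : 0 ≤ ε ^ 2 * (a + c - b) := mul_nonneg (sq_nonneg ε) (by linarith)
  have haux3 : 0 ≤ ε ^ 2 * (a + b - c) := mul_nonneg (sq_nonneg ε) (by linarith)
  have hXS : ε ^ 2 * (a + b + c) ≤ 20 * (-a + b + c) := by linarith [hXb, hXc]
  have hYS : ε ^ 2 * (a + b + c) ≤ 20 * (a - b + c) := by linarith [hYa, hYc]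
  have hZS : ε ^ 2 * (a + b + c) ≤ 20 * (a + b - c) := by linarith [hZa, hZb]
  have hSS : ε ^ 2 * (a + b + c) ≤ 20 * (a + b + c) := by
    have := mul_nonneg (show (0:ℝ) ≤ 20 - ε ^ 2 by linarith) hS0.le
    nlinarith [this]
  -- the relative perturbation parameter
  set t := 20 * δ / ε ^ 2 with ht
  have hε2 : (0:ℝ) < ε ^ 2 := by positivity
  have ht0 : 0 ≤ t := by positivity
  have htle : t ≤ 5 / 12 := by
    rw [ht, div_le_iff₀ hε2]; linarith
  have huS : δ * (a + b + c) ≤ t * (a + b + c) := by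
    rw [ht, div_mul_eq_mul_div, le_div_iff₀ hε2]
    linarith [mul_le_mul_of_nonneg_left hSS hδ0]
  have huX : δ * (a + b + c) ≤ t * (-a + b + c) := by
    rw [ht, div_mul_eq_mul_div, le_div_iff₀ hε2]
    linarith [mul_le_mul_of_nonneg_left hXS hδ0]
  have huY : δ * (a + b + c) ≤ t * (a - b + c) := by
    rw [ht, div_mul_eq_mul_div, le_div_iff₀ hε2]
    linarith [mul_le_mul_of_nonneg_left hYS hδ0]
  have huZ : δ * (a + b + c) ≤ t * (a + b - c) := by
    rw [ht, div_mul_eq_mul_div, le_div_iff₀ hε2]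
    linarith [mul_le_mul_of_nonneg_left hZS hδ0]
  obtain ⟨hpa1, hpa2⟩ := abs_le.mp hpa
  obtain ⟨hpb1, hpb2⟩ := abs_le.mp hpb
  obtain ⟨hpc1, hpc2⟩ := abs_le.mp hpc
  -- bounds on perturbed factors
  have hS'u : a' + b' + c' ≤ (1 + t) * (a + b + c) := by linarith [huS]
  have hS'l : (1 - t) * (a + b + c) ≤ a' + b' + c' := by linarith [huS]
  have hX'u : -a' + b' + c' ≤ (1 + t) * (-a + b + c) := by linarith [huX]
  have hX'l : (1 - t) * (-a + b + c) ≤ -a' + b' + c' := by linarith [huX]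
  have hY'u : a' - b' + c' ≤ (1 + t) * (a - b + c) := by linarith [huY]
  have hY'l : (1 - t) * (a - b + c) ≤ a' - b' + c' := by linarith [huY]
  have hZ'u : a' + b' - c' ≤ (1 + t) * (a + b - c) := by linarith [huZ]
  have hZ'l : (1 - t) * (a + b - c) ≤ a' + b' - c' := by linarith [huZ]
  have h1t : (0:ℝ) < 1 - t := by linarith
  have hS'0 : (0:ℝ) ≤ a' + b' + c' := le_trans (by positivity) hS'l
  have hX'0 : (0:ℝ) ≤ -a' + b' + c' := le_trans (by positivity) hX'l
  have hY'0 : (0:ℝ) ≤ a' - b' + c' := le_trans (by positivity) hY'l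
  have hZ'0 : (0:ℝ) ≤ a' + b' - c' := le_trans (by positivity) hZ'l
  set P := (a + b + c) * (-a + b + c) * (a - b + c) * (a + b - c) with hP
  set P' := (a' + b' + c') * (-a' + b' + c') * (a' - b' + c') * (a' + b' - c') with hP'
  have hP0 : (0:ℝ) ≤ P := by positivity
  have hP'u : P' ≤ (1 + t) ^ 4 * P := by
    have h1 : (a' + b' + c') * (-a' + b' + c') ≤
        ((1 + t) * (a + b + c)) * ((1 + t) * (-a + b + c)) :=
      mul_le_mul hS'u hX'u hX'0 (by positivity)
    have h2 : (a' + b' + c') * (-a' + b' + c') * (a' - b' + c') ≤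
        ((1 + t) * (a + b + c)) * ((1 + t) * (-a + b + c)) * ((1 + t) * (a - b + c)) :=
      mul_le_mul h1 hY'u hY'0 (by positivity)
    calc P' ≤ ((1 + t) * (a + b + c)) * ((1 + t) * (-a + b + c)) * ((1 + t) * (a - b + c)) *
          ((1 + t) * (a + b - c)) := mul_le_mul h2 hZ'u hZ'0 (by positivity)
      _ = (1 + t) ^ 4 * P := by rw [hP]; ring
  have hP'l : (1 - t) ^ 4 * P ≤ P' := by
    have h1 : ((1 - t) * (a + b + c)) * ((1 - t) * (-a + b + c)) ≤
        (a' + b' + c') * (-a' + b' + c') :=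
      mul_le_mul hS'l hX'l (by positivity) hS'0
    have h2 : ((1 - t) * (a + b + c)) * ((1 - t) * (-a + b + c)) * ((1 - t) * (a - b + c)) ≤
        (a' + b' + c') * (-a' + b' + c') * (a' - b' + c') :=
      mul_le_mul h1 hY'l (by positivity) (mul_nonneg hS'0 hX'0)
    calc (1 - t) ^ 4 * P = ((1 - t) * (a + b + c)) * ((1 - t) * (-a + b + c)) *
          ((1 - t) * (a - b + c)) * ((1 - t) * (a + b - c)) := by rw [hP]; ring
      _ ≤ P' := mul_le_mul h2 hZ'l (by positivity) (mul_nonneg (mul_nonneg hS'0 hX'0) hY'0)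
  have hsu : Real.sqrt P' ≤ (1 + t) ^ 2 * Real.sqrt P := by
    calc Real.sqrt P' ≤ Real.sqrt ((1 + t) ^ 4 * P) := Real.sqrt_le_sqrt hP'u
      _ = (1 + t) ^ 2 * Real.sqrt P := by
        rw [show (1 + t) ^ 4 * P = ((1 + t) ^ 2) ^ 2 * P by ring,
          Real.sqrt_mul (by positivity) P, Real.sqrt_sq (by positivity)]
  have hsl : (1 - t) ^ 2 * Real.sqrt P ≤ Real.sqrt P' := by
    have e : Real.sqrt ((1 - t) ^ 4 * P) = (1 - t) ^ 2 * Real.sqrt P := by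
      rw [show (1 - t) ^ 4 * P = ((1 - t) ^ 2) ^ 2 * P by ring,
        Real.sqrt_mul (by positivity) P, Real.sqrt_sq (by positivity)]
    rw [← e]
    exact Real.sqrt_le_sqrt hP'l
  have hsP : (0:ℝ) ≤ Real.sqrt P := Real.sqrt_nonneg P
  have hrhs : 576 / ε ^ 2 * δ = 28.8 * t := by rw [ht]; ring
  unfold heronArea
  rw [← hP, ← hP', hrhs, abs_le]
  have htP : (0:ℝ) ≤ t * Real.sqrt P := mul_nonneg ht0 hsP
  have htP2 : (0:ℝ) ≤ t * (5 / 12 - t) * Real.sqrt P :=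
    mul_nonneg (mul_nonneg ht0 (by linarith)) hsP
  constructor
  · linarith [hsl, htP, mul_nonneg (mul_nonneg ht0 ht0) hsP]
  · linarith [hsu, htP, htP2]
end

section
/- Let a Euclidean triangle and a spherical triangle (on the unit sphere) have the same side lengths a, b, c, with the spherical triangle of diameter less than π/3. Then the spherical angle A' and Euclidean angle A opposite the side a satisfy |A' - A| ≤ 2(a + b + c)². -/
/-!
Write `sin x = x * sinc x`. The half-angle forms of the two laws of cosines,
`(1 - cos A) b c = 2 u v` and `(1 - cos A') sin b sin c = 2 sin u sin v` with
`u, v = (a ∓ (b - c)) / 2`, and similarly for `1 + cos`, say that `1 ∓ cos A'` equals `1 ∓ cos A`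
times a quotient of two products `sinc x * sinc y`. As `1 - x ^ 2 / 6 ≤ sinc x ≤ 1`, all these
products lie within `(a + b + c) ^ 2 / 6` of `1` and above `1 / 4`. This bounds
`(cos A' - cos A) ^ 2` by a multiple of both `sin ^ 2 A` and `sin ^ 2 A'`, and the mean value
theorem for `arccos` turns that into the bound on `A' - A`.
-/

open Real

namespace Real

lemma sin_eq_mul_sinc (x : ℝ) : sin x = x * sinc x := by
  rcases eq_or_ne x 0 with rfl | hx
  · simp
  · rw [sinc_of_ne_zero hx, mul_div_cancel₀ _ hx]

lemma one_sub_sq_div_six_le_sinc (x : ℝ) : 1 - x ^ 2 / 6 ≤ sinc x := by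
  rcases eq_or_ne x 0 with rfl | hx
  · simp
  have hx' : 0 < |x| := abs_pos.2 hx
  have h : |x| * |1 - sinc x| ≤ |x| * (x ^ 2 / 6) := by
    rw [← abs_mul, mul_sub, mul_one, ← sin_eq_mul_sinc, ← sq_abs x]
    linarith [abs_sub_sin_le x, pow_succ' |x| 2]
  linarith [(abs_le.1 (le_of_mul_le_mul_left h hx')).2]

lemma half_le_sinc {x : ℝ} (hx : x ^ 2 ≤ 3) : 1 / 2 ≤ sinc x := by
  linarith [one_sub_sq_div_six_le_sinc x]

lemma sinc_mul_sinc_mem_Icc {x y : ℝ} (hx : x ^ 2 ≤ 6) (hy : y ^ 2 ≤ 6) :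
    sinc x * sinc y ∈ Set.Icc (1 - (x ^ 2 + y ^ 2) / 6) 1 := by
  have hx' := one_sub_sq_div_six_le_sinc x
  have hy' := one_sub_sq_div_six_le_sinc y
  constructor
  · nlinarith [mul_le_mul hx' hy' (by linarith) (by linarith),
      mul_nonneg (sq_nonneg x) (sq_nonneg y)]
  · calc sinc x * sinc y ≤ |sinc x| * |sinc y| := by rw [← abs_mul]; exact le_abs_self _
      _ ≤ 1 * 1 := mul_le_mul (abs_sinc_le_one x) (abs_sinc_le_one y) (abs_nonneg _) zero_le_one
      _ = 1 := one_mul 1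

lemma sinc_mul_sinc_bounds {x y s : ℝ} (hx₀ : 0 ≤ x) (hy₀ : 0 ≤ y) (hx : x < π / 2)
    (hy : y < π / 2) (hs : x + y ≤ s) :
    1 / 4 ≤ sinc x * sinc y ∧ sinc x * sinc y ∈ Set.Icc (1 - s ^ 2 / 6) 1 := by
  have hx3 : x ^ 2 ≤ 3 := by nlinarith [pi_lt_d2]
  have hy3 : y ^ 2 ≤ 3 := by nlinarith [pi_lt_d2]
  refine ⟨?_, Set.Icc_subset_Icc (by nlinarith) le_rfl
    (sinc_mul_sinc_mem_Icc (by linarith) (by linarith))⟩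
  nlinarith [mul_le_mul (half_le_sinc hx3) (half_le_sinc hy3) (by norm_num)
    (by linarith [half_le_sinc hx3])]

lemma abs_arccos_sub_arccos_le_div_sqrt {x y K : ℝ} (hK : 0 < K) (hx : K ≤ 1 - x ^ 2)
    (hy : K ≤ 1 - y ^ 2) : |arccos y - arccos x| ≤ |y - x| / √K := by
  have hK_le : ∀ t ∈ Set.uIcc x y, K ≤ 1 - t ^ 2 := by
    intro t ht
    rcases Set.mem_uIcc.1 ht with ⟨h₁, h₂⟩ | ⟨h₁, h₂⟩ <;> rcases le_total t 0 with h | h <;>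
      nlinarith
  have hderiv : ∀ t ∈ Set.uIcc x y,
      HasDerivWithinAt arccos (-(1 / √(1 - t ^ 2))) (Set.uIcc x y) t := by
    intro t ht
    have := hK_le t ht
    exact (hasDerivAt_arccos (by rintro rfl; nlinarith) (by rintro rfl; nlinarith)).hasDerivWithinAt
  have hbound : ∀ t ∈ Set.uIcc x y, ‖-(1 / √(1 - t ^ 2))‖ ≤ 1 / √K := by
    intro t ht
    rw [norm_neg, Real.norm_eq_abs, abs_of_nonneg (by positivity)]
    exact one_div_le_one_div_of_le (sqrt_pos.2 hK) (sqrt_le_sqrt (hK_le t ht))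
  have := (convex_uIcc x y).norm_image_sub_le_of_norm_hasDerivWithin_le hderiv hbound
    Set.left_mem_uIcc Set.right_mem_uIcc
  rwa [Real.norm_eq_abs, Real.norm_eq_abs, one_div_mul_eq_div] at this

lemma abs_arccos_sub_arccos_le_of_sq_le {x y M : ℝ} (hM : 0 ≤ M)
    (hx : (y - x) ^ 2 ≤ M ^ 2 * (1 - x ^ 2)) (hy : (y - x) ^ 2 ≤ M ^ 2 * (1 - y ^ 2)) :
    |arccos y - arccos x| ≤ M := by
  rcases eq_or_ne y x with rfl | hyx
  · simpa using hM
  have hpos : 0 < (y - x) ^ 2 := by positivity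
  set K := min (1 - x ^ 2) (1 - y ^ 2)
  have hK : 0 < K := lt_min (by nlinarith) (by nlinarith)
  have hsq : (y - x) ^ 2 ≤ M ^ 2 * K := by
    rcases min_choice (1 - x ^ 2) (1 - y ^ 2) with h | h <;> rw [show K = _ from h] <;> assumption
  have hle : |y - x| ≤ M * √K := by
    rw [← sqrt_sq_eq_abs, ← sqrt_sq hM, ← sqrt_mul (sq_nonneg M)]
    exact sqrt_le_sqrt hsq
  calc |arccos y - arccos x| ≤ |y - x| / √K :=
        abs_arccos_sub_arccos_le_div_sqrt hK (min_le_left _ _) (min_le_right _ _)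
    _ ≤ M * √K / √K := by gcongr
    _ = M := mul_div_cancel_right₀ M (sqrt_pos.2 hK).ne'

end Real

noncomputable def euclideanCosAngle (a b c : ℝ) : ℝ := (b ^ 2 + c ^ 2 - a ^ 2) / (2 * b * c)

noncomputable def sphericalCosAngle (a b c : ℝ) : ℝ :=
  (cos a - cos b * cos c) / (sin b * sin c)

section HalfAngle

variable {a b c : ℝ}

lemma one_sub_euclideanCosAngle_mul (hb : b ≠ 0) (hc : c ≠ 0) :
    (1 - euclideanCosAngle a b c) * (b * c) = 2 * ((a - b + c) / 2 * ((a + b - c) / 2)) := by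
  unfold euclideanCosAngle; field_simp; ring

lemma one_add_euclideanCosAngle_mul (hb : b ≠ 0) (hc : c ≠ 0) :
    (1 + euclideanCosAngle a b c) * (b * c) = 2 * ((a + b + c) / 2 * ((b + c - a) / 2)) := by
  unfold euclideanCosAngle; field_simp; ring

lemma one_sub_sphericalCosAngle_mul (hb : sin b ≠ 0) (hc : sin c ≠ 0) :
    (1 - sphericalCosAngle a b c) * (sin b * sin c) =
      2 * (sin ((a - b + c) / 2) * sin ((a + b - c) / 2)) := by
  have h := cos_sub_cos (b - c) a
  rw [cos_sub, show (b - c + a) / 2 = (a + b - c) / 2 by ring,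
    show (b - c - a) / 2 = -((a - b + c) / 2) by ring, sin_neg] at h
  unfold sphericalCosAngle; field_simp
  linear_combination h

lemma one_add_sphericalCosAngle_mul (hb : sin b ≠ 0) (hc : sin c ≠ 0) :
    (1 + sphericalCosAngle a b c) * (sin b * sin c) =
      2 * (sin ((a + b + c) / 2) * sin ((b + c - a) / 2)) := by
  have h := cos_sub_cos a (b + c)
  rw [cos_add, show (a + (b + c)) / 2 = (a + b + c) / 2 by ring,
    show (a - (b + c)) / 2 = -((b + c - a) / 2) by ring, sin_neg] at h
  unfold sphericalCosAngle; field_simp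
  linear_combination h

lemma one_sub_sphericalCosAngle_mul_sinc (hb : sin b ≠ 0) (hc : sin c ≠ 0) :
    (1 - sphericalCosAngle a b c) * (sinc b * sinc c) =
      (1 - euclideanCosAngle a b c) * (sinc ((a - b + c) / 2) * sinc ((a + b - c) / 2)) := by
  have hb₀ : b ≠ 0 := by rintro rfl; simp at hb
  have hc₀ : c ≠ 0 := by rintro rfl; simp at hc
  have hs := one_sub_sphericalCosAngle_mul (a := a) hb hc
  have he := one_sub_euclideanCosAngle_mul (a := a) hb₀ hc₀
  simp only [sin_eq_mul_sinc] at hs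
  refine mul_left_cancel₀ (mul_ne_zero hb₀ hc₀) ?_
  linear_combination hs - sinc ((a - b + c) / 2) * sinc ((a + b - c) / 2) * he

lemma one_add_sphericalCosAngle_mul_sinc (hb : sin b ≠ 0) (hc : sin c ≠ 0) :
    (1 + sphericalCosAngle a b c) * (sinc b * sinc c) =
      (1 + euclideanCosAngle a b c) * (sinc ((a + b + c) / 2) * sinc ((b + c - a) / 2)) := by
  have hb₀ : b ≠ 0 := by rintro rfl; simp at hb
  have hc₀ : c ≠ 0 := by rintro rfl; simp at hc
  have hs := one_add_sphericalCosAngle_mul (a := a) hb hc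
  have he := one_add_euclideanCosAngle_mul (a := a) hb₀ hc₀
  simp only [sin_eq_mul_sinc] at hs
  refine mul_left_cancel₀ (mul_ne_zero hb₀ hc₀) ?_
  linear_combination hs - sinc ((a + b + c) / 2) * sinc ((b + c - a) / 2) * he

lemma euclideanCosAngle_sq_le_one (hb : 0 < b) (hc : 0 < c) (h₁ : a ≤ b + c) (h₂ : b ≤ a + c)
    (h₃ : c ≤ a + b) : euclideanCosAngle a b c ^ 2 ≤ 1 := by
  have hsub := one_sub_euclideanCosAngle_mul (a := a) hb.ne' hc.ne'
  have hadd := one_add_euclideanCosAngle_mul (a := a) hb.ne' hc.ne'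
  have hbc : 0 < b * c := mul_pos hb hc
  have hsub₀ : 0 ≤ 1 - euclideanCosAngle a b c := by nlinarith
  have hadd₀ : 0 ≤ 1 + euclideanCosAngle a b c := by nlinarith
  nlinarith

end HalfAngle

lemma sq_sub_mul_eq_of_mul_eq {X Y α β γ : ℝ} (hα : α ≠ 0) (h₁ : (1 - Y) * α = (1 - X) * β)
    (h₂ : (1 + Y) * α = (1 + X) * γ) :
    (Y - X) ^ 2 * α ^ 2 = (1 - X ^ 2) * ((α - β) * (γ - α)) ∧
      (Y - X) ^ 2 * (β * γ) = (1 - Y ^ 2) * ((α - β) * (γ - α)) := by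
  have hX : (Y - X) ^ 2 * α ^ 2 = (1 - X ^ 2) * ((α - β) * (γ - α)) := by
    linear_combination -((1 + X) * (γ - α)) * h₁ + (Y - X) * α * h₂
  refine ⟨hX, mul_left_cancel₀ (pow_ne_zero 2 hα) ?_⟩
  linear_combination (β * γ) * hX - ((α - β) * (γ - α)) * ((1 + Y) * α * h₁ + (1 - X) * β * h₂)

lemma abs_arccos_sub_arccos_le_of_mul_eq {X Y α β γ ε m : ℝ} (hX : X ^ 2 ≤ 1) (hm : 0 < m)
    (hα : m ≤ α) (hβ : m ≤ β) (hγ : m ≤ γ) (hα' : α ∈ Set.Icc (1 - ε) 1)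
    (hβ' : β ∈ Set.Icc (1 - ε) 1) (hγ' : γ ∈ Set.Icc (1 - ε) 1)
    (h₁ : (1 - Y) * α = (1 - X) * β) (h₂ : (1 + Y) * α = (1 + X) * γ) :
    |arccos Y - arccos X| ≤ ε / m := by
  obtain ⟨hXeq, hYeq⟩ := sq_sub_mul_eq_of_mul_eq (by linarith) h₁ h₂
  have hε : 0 ≤ ε := by linarith [hα'.1, hα'.2]
  have hP : (α - β) * (γ - α) ≤ ε ^ 2 := by
    have hαβ : |α - β| ≤ ε :=
      abs_sub_le_iff.2 ⟨by linarith [hα'.2, hβ'.1], by linarith [hα'.1, hβ'.2]⟩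
    have hγα : |γ - α| ≤ ε :=
      abs_sub_le_iff.2 ⟨by linarith [hγ'.2, hα'.1], by linarith [hγ'.1, hα'.2]⟩
    calc (α - β) * (γ - α) ≤ |α - β| * |γ - α| := by rw [← abs_mul]; exact le_abs_self _
      _ ≤ ε ^ 2 := by rw [sq]; exact mul_le_mul hαβ hγα (abs_nonneg _) hε
  have hY : 0 ≤ 1 - Y ^ 2 := by
    have h : (1 - Y ^ 2) * α ^ 2 = (1 - X ^ 2) * (β * γ) := by
      linear_combination (1 + Y) * α * h₁ + (1 - X) * β * h₂
    have : 0 * α ^ 2 ≤ (1 - Y ^ 2) * α ^ 2 := by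
      rw [h, zero_mul]; exact mul_nonneg (by linarith) (by nlinarith)
    exact le_of_mul_le_mul_right this (by nlinarith)
  apply abs_arccos_sub_arccos_le_of_sq_le (by positivity) <;>
    rw [div_pow, div_mul_eq_mul_div, le_div_iff₀ (by positivity)]
  · calc (Y - X) ^ 2 * m ^ 2 ≤ (Y - X) ^ 2 * α ^ 2 := by gcongr
      _ = (1 - X ^ 2) * ((α - β) * (γ - α)) := hXeq
      _ ≤ ε ^ 2 * (1 - X ^ 2) := by
        rw [mul_comm]; exact mul_le_mul_of_nonneg_right hP (by linarith)
  · calc (Y - X) ^ 2 * m ^ 2 ≤ (Y - X) ^ 2 * (β * γ) := by rw [sq m]; gcongr; linarith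
      _ = (1 - Y ^ 2) * ((α - β) * (γ - α)) := hYeq
      _ ≤ ε ^ 2 * (1 - Y ^ 2) := by rw [mul_comm]; exact mul_le_mul_of_nonneg_right hP hY

theorem spherical_euclidean_angle_comparison_general (a b c : ℝ)
    (hb : 0 < b) (hc : 0 < c)
    (ha' : a < π / 3) (hb' : b < π / 3) (hc' : c < π / 3)
    (htri1 : a < b + c) (htri2 : b < a + c) (htri3 : c < a + b) :
    |Real.arccos ((Real.cos a - Real.cos b * Real.cos c) / (Real.sin b * Real.sin c))
        - Real.arccos ((b ^ 2 + c ^ 2 - a ^ 2) / (2 * b * c))| ≤ 2 * (a + b + c) ^ 2 := by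
  change |arccos (sphericalCosAngle a b c) - arccos (euclideanCosAngle a b c)| ≤ _
  have hsb : sin b ≠ 0 := (sin_pos_of_pos_of_lt_pi hb (by linarith [pi_pos])).ne'
  have hsc : sin c ≠ 0 := (sin_pos_of_pos_of_lt_pi hc (by linarith [pi_pos])).ne'
  obtain ⟨hα, hα'⟩ := sinc_mul_sinc_bounds (s := a + b + c) hb.le hc.le
    (by linarith) (by linarith) (by linarith)
  obtain ⟨hβ, hβ'⟩ := sinc_mul_sinc_bounds (x := (a - b + c) / 2) (y := (a + b - c) / 2)
    (s := a + b + c) (by linarith) (by linarith) (by linarith) (by linarith) (by linarith)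
  obtain ⟨hγ, hγ'⟩ := sinc_mul_sinc_bounds (x := (a + b + c) / 2) (y := (b + c - a) / 2)
    (s := a + b + c) (by linarith) (by linarith) (by linarith) (by linarith) (by linarith)
  calc _ ≤ (a + b + c) ^ 2 / 6 / (1 / 4) :=
        abs_arccos_sub_arccos_le_of_mul_eq
          (euclideanCosAngle_sq_le_one hb hc htri1.le htri2.le htri3.le) (by norm_num)
          hα hβ hγ hα' hβ' hγ' (one_sub_sphericalCosAngle_mul_sinc hsb hsc)
          (one_add_sphericalCosAngle_mul_sinc hsb hsc)
    _ ≤ 2 * (a + b + c) ^ 2 := by nlinarith [sq_nonneg (a + b + c)]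

/-- If a Euclidean triangle and a spherical triangle on the unit sphere have the same side
lengths `a, b, c`, all less than `π/3`, then the spherical angle `A'` and the Euclidean
angle `A` opposite the side `a` satisfy `|A' - A| ≤ 2(a+b+c)²`. -/
theorem spherical_euclidean_angle_comparison (a b c : ℝ)
    (ha : 0 < a) (hb : 0 < b) (hc : 0 < c)
    (ha' : a < π / 3) (hb' : b < π / 3) (hc' : c < π / 3)
    (htri1 : a < b + c) (htri2 : b < a + c) (htri3 : c < a + b) :
    |Real.arccos ((Real.cos a - Real.cos b * Real.cos c) / (Real.sin b * Real.sin c))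
        - Real.arccos ((b ^ 2 + c ^ 2 - a ^ 2) / (2 * b * c))| ≤ 2 * (a + b + c) ^ 2 :=
  spherical_euclidean_angle_comparison_general a b c hb hc ha' hb' hc' htri1 htri2 htri3
end
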